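/- arXiv:1606.04789 — 2 statements merged into one kernel-verified Lean document; each statement's English description precedes it below -/
import Mathlib

section
/- Let X₁ and X₂ be finite discrete random variables with joint pmf P on alphabets of size at most K (each of size at least 2), let 𝒦 = K², and let δ' be the smallest marginal probability of X₁ or X₂ under P (assumed strictly positive). Let ρ be the maximal correlation of (X₁,X₂) under P and let ρ^{(m)} be the maximal correlation computed from the empirical joint pmf of m i.i.d. samples from P. For any 0 < ε ≤ 1 and 0 < η ≤ 1, if m ≥ 2·(32·𝒦/(ε·δ'²))²·log(16/η), then Prob(|ρ^{(m)} − ρ| > ε) ≤ η. -/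
open MeasureTheory ProbabilityTheory

/-- Marginal pmf of the first coordinate. -/
noncomputable def marg1 {K1 K2 : ℕ} (P : Fin K1 × Fin K2 → ℝ) (j : Fin K1) : ℝ :=
  ∑ j' : Fin K2, P (j, j')

/-- Marginal pmf of the second coordinate. -/
noncomputable def marg2 {K1 K2 : ℕ} (P : Fin K1 × Fin K2 → ℝ) (j' : Fin K2) : ℝ :=
  ∑ j : Fin K1, P (j, j')

/-- The maximal correlation of a bivariate pmf `P`. -/
noncomputable def mcPmf {K1 K2 : ℕ} (P : Fin K1 × Fin K2 → ℝ) : ℝ :=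
  sSup {r : ℝ | ∃ φ₁ : Fin K1 → ℝ, ∃ φ₂ : Fin K2 → ℝ,
    (∑ x : Fin K1 × Fin K2, P x * φ₁ x.1) = 0 ∧
    (∑ x : Fin K1 × Fin K2, P x * φ₂ x.2) = 0 ∧
    (∑ x : Fin K1 × Fin K2, P x * (φ₁ x.1) ^ 2) = 1 ∧
    (∑ x : Fin K1 × Fin K2, P x * (φ₂ x.2) ^ 2) = 1 ∧
    r = ∑ x : Fin K1 × Fin K2, P x * (φ₁ x.1 * φ₂ x.2)}

/-- The empirical joint pmf built from `m` samples. -/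
noncomputable def empPmf2 {Ω : Type*} {K1 K2 : ℕ} (m : ℕ)
    (Y : Fin m → Ω → Fin K1 × Fin K2) (ω : Ω) : Fin K1 × Fin K2 → ℝ :=
  fun x => (m : ℝ)⁻¹ * ∑ s, if Y s ω = x then (1 : ℝ) else 0

namespace SampleMC

variable {K1 K2 : ℕ}

def mcSet (P : Fin K1 × Fin K2 → ℝ) : Set ℝ :=
  {r : ℝ | ∃ φ₁ : Fin K1 → ℝ, ∃ φ₂ : Fin K2 → ℝ,
    (∑ x : Fin K1 × Fin K2, P x * φ₁ x.1) = 0 ∧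
    (∑ x : Fin K1 × Fin K2, P x * φ₂ x.2) = 0 ∧
    (∑ x : Fin K1 × Fin K2, P x * (φ₁ x.1) ^ 2) = 1 ∧
    (∑ x : Fin K1 × Fin K2, P x * (φ₂ x.2) ^ 2) = 1 ∧
    r = ∑ x : Fin K1 × Fin K2, P x * (φ₁ x.1 * φ₂ x.2)}

lemma mcPmf_eq (P : Fin K1 × Fin K2 → ℝ) : mcPmf P = sSup (mcSet P) := rfl

lemma sum_fst (P : Fin K1 × Fin K2 → ℝ) (f : Fin K1 → ℝ) :
    ∑ x : Fin K1 × Fin K2, P x * f x.1 = ∑ j, marg1 P j * f j := by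
  rw [Fintype.sum_prod_type]
  exact Finset.sum_congr rfl fun j _ => by rw [marg1, Finset.sum_mul]

lemma sum_snd (P : Fin K1 × Fin K2 → ℝ) (f : Fin K2 → ℝ) :
    ∑ x : Fin K1 × Fin K2, P x * f x.2 = ∑ j', marg2 P j' * f j' := by
  rw [Fintype.sum_prod_type_right]
  exact Finset.sum_congr rfl fun j' _ => by rw [marg2, Finset.sum_mul]

lemma sum_marg1 (P : Fin K1 × Fin K2 → ℝ) : ∑ j, marg1 P j = ∑ x, P x := by
  rw [Fintype.sum_prod_type]; rfl

lemma sum_marg2 (P : Fin K1 × Fin K2 → ℝ) : ∑ j', marg2 P j' = ∑ x, P x := by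
  rw [Fintype.sum_prod_type_right]; rfl

lemma abs_le_one_of_mem {P : Fin K1 × Fin K2 → ℝ} (hP0 : ∀ x, 0 ≤ P x) {r : ℝ}
    (hr : r ∈ mcSet P) : |r| ≤ 1 := by
  obtain ⟨φ₁, φ₂, -, -, h3, h4, h5⟩ := hr
  have key := Finset.sum_mul_sq_le_sq_mul_sq Finset.univ
    (fun x : Fin K1 × Fin K2 => Real.sqrt (P x) * φ₁ x.1)
    (fun x : Fin K1 × Fin K2 => Real.sqrt (P x) * φ₂ x.2)
  have e1 : ∑ x : Fin K1 × Fin K2, (Real.sqrt (P x) * φ₁ x.1) * (Real.sqrt (P x) * φ₂ x.2)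
      = ∑ x : Fin K1 × Fin K2, P x * (φ₁ x.1 * φ₂ x.2) :=
    Finset.sum_congr rfl fun x _ => by
      rw [mul_mul_mul_comm, Real.mul_self_sqrt (hP0 x)]
  have e2 : ∑ x : Fin K1 × Fin K2, (Real.sqrt (P x) * φ₁ x.1) ^ 2
      = ∑ x : Fin K1 × Fin K2, P x * (φ₁ x.1) ^ 2 :=
    Finset.sum_congr rfl fun x _ => by rw [mul_pow, Real.sq_sqrt (hP0 x)]
  have e3 : ∑ x : Fin K1 × Fin K2, (Real.sqrt (P x) * φ₂ x.2) ^ 2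
      = ∑ x : Fin K1 × Fin K2, P x * (φ₂ x.2) ^ 2 :=
    Finset.sum_congr rfl fun x _ => by rw [mul_pow, Real.sq_sqrt (hP0 x)]
  rw [e1, e2, e3, h3, h4, one_mul, ← h5] at key
  nlinarith [abs_nonneg r, sq_abs r]

lemma bddAbove_mcSet {P : Fin K1 × Fin K2 → ℝ} (hP0 : ∀ x, 0 ≤ P x) :
    BddAbove (mcSet P) :=
  ⟨1, fun _ hr => (abs_le.1 (abs_le_one_of_mem hP0 hr)).2⟩

lemma neg_mem_mcSet {P : Fin K1 × Fin K2 → ℝ} {r : ℝ} (hr : r ∈ mcSet P) :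
    -r ∈ mcSet P := by
  obtain ⟨φ₁, φ₂, h1, h2, h3, h4, h5⟩ := hr
  have e1 : ∑ x : Fin K1 × Fin K2, P x * (fun j => -φ₁ j) x.1
      = -∑ x : Fin K1 × Fin K2, P x * φ₁ x.1 := by
    rw [← Finset.sum_neg_distrib]
    exact Finset.sum_congr rfl fun x _ => by ring
  have e3 : ∑ x : Fin K1 × Fin K2, P x * ((fun j => -φ₁ j) x.1) ^ 2
      = ∑ x : Fin K1 × Fin K2, P x * (φ₁ x.1) ^ 2 :=
    Finset.sum_congr rfl fun x _ => by ring
  have e5 : ∑ x : Fin K1 × Fin K2, P x * ((fun j => -φ₁ j) x.1 * φ₂ x.2)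
      = -∑ x : Fin K1 × Fin K2, P x * (φ₁ x.1 * φ₂ x.2) := by
    rw [← Finset.sum_neg_distrib]
    exact Finset.sum_congr rfl fun x _ => by ring
  exact ⟨fun j => -φ₁ j, φ₂, by rw [e1, h1, neg_zero], h2, by rw [e3, h3], h4,
    by rw [e5, ← h5]⟩

lemma std_pair {K : ℕ} (hK : 2 ≤ K) (w : Fin K → ℝ) (γ : ℝ) (hγ : 0 < γ)
    (hw : ∀ j, γ ≤ w j) (h1 : ∑ j, w j = 1) :
    ∃ φ : Fin K → ℝ, (∑ j, w j * φ j = 0) ∧ (∑ j, w j * φ j ^ 2 = 1) := by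
  have hK0 : 0 < K := by omega
  have hK1 : 1 < K := by omega
  set j0 : Fin K := ⟨0, hK0⟩ with hj0
  set j1 : Fin K := ⟨1, hK1⟩ with hj1
  have hne : j1 ≠ j0 := by simp [hj0, hj1, Fin.ext_iff]
  set p : ℝ := w j0 with hp
  have hpγ : γ ≤ p := hw j0
  have h1p : γ ≤ 1 - p := by
    have hsplit := Finset.add_sum_erase Finset.univ w (Finset.mem_univ j0)
    have h2 : w j1 ≤ ∑ j ∈ Finset.univ.erase j0, w j :=
      Finset.single_le_sum (fun i _ => le_trans hγ.le (hw i))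
        (Finset.mem_erase.2 ⟨hne, Finset.mem_univ _⟩)
    have := hw j1
    rw [h1] at hsplit
    linarith
  have hv : 0 < p * (1 - p) := mul_pos (lt_of_lt_of_le hγ hpγ) (lt_of_lt_of_le hγ h1p)
  set c : ℝ := Real.sqrt (p * (1 - p)) with hc
  have hc2 : c ^ 2 = p * (1 - p) := Real.sq_sqrt hv.le
  have hc0 : c ≠ 0 := (Real.sqrt_pos.2 hv).ne'
  refine ⟨fun j => ((if j = j0 then (1 : ℝ) else 0) - p) / c, ?_, ?_⟩
  · have hχ : ∑ j, w j * (if j = j0 then (1 : ℝ) else 0) = p := by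
      simp [mul_ite, mul_one, mul_zero, Finset.sum_ite_eq', hp]
    have : ∀ j, w j * (((if j = j0 then (1 : ℝ) else 0) - p) / c)
        = (w j * (if j = j0 then (1 : ℝ) else 0) - w j * p) / c := fun j => by ring
    simp only [this]
    rw [← Finset.sum_div, Finset.sum_sub_distrib, hχ, ← Finset.sum_mul, h1, one_mul,
      sub_self, zero_div]
  · have hχ : ∑ j, w j * (if j = j0 then (1 : ℝ) else 0) = p := by
      simp [mul_ite, mul_one, mul_zero, Finset.sum_ite_eq', hp]
    have hpt : ∀ j, w j * (((if j = j0 then (1 : ℝ) else 0) - p) / c) ^ 2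
        = (w j * (if j = j0 then (1 : ℝ) else 0) * (1 - 2 * p) + w j * p ^ 2) / (p * (1 - p)) := by
      intro j
      rw [div_pow, hc2]
      split_ifs with h <;> ring
    simp only [hpt]
    rw [← Finset.sum_div, Finset.sum_add_distrib, ← Finset.sum_mul, ← Finset.sum_mul, hχ, h1,
      div_eq_one_iff_eq hv.ne']
    ring


lemma exists_mem_mcSet (hK1 : 2 ≤ K1) (hK2 : 2 ≤ K2) {P : Fin K1 × Fin K2 → ℝ}
    (hP1 : ∑ x, P x = 1) {γ : ℝ} (hγ : 0 < γ)
    (hm1 : ∀ j, γ ≤ marg1 P j) (hm2 : ∀ j', γ ≤ marg2 P j') :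
    ∃ r, r ∈ mcSet P := by
  obtain ⟨φ₁, hφ1a, hφ1b⟩ := std_pair hK1 (marg1 P) γ hγ hm1 (by rw [sum_marg1]; exact hP1)
  obtain ⟨φ₂, hφ2a, hφ2b⟩ := std_pair hK2 (marg2 P) γ hγ hm2 (by rw [sum_marg2]; exact hP1)
  refine ⟨∑ x : Fin K1 × Fin K2, P x * (φ₁ x.1 * φ₂ x.2), φ₁, φ₂, ?_, ?_, ?_, ?_, rfl⟩
  · have : ∑ x : Fin K1 × Fin K2, P x * φ₁ x.1 = ∑ j, marg1 P j * φ₁ j := sum_fst P φ₁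
    rw [this, hφ1a]
  · have : ∑ x : Fin K1 × Fin K2, P x * φ₂ x.2 = ∑ j', marg2 P j' * φ₂ j' := sum_snd P φ₂
    rw [this, hφ2a]
  · have : ∑ x : Fin K1 × Fin K2, P x * (φ₁ x.1) ^ 2 = ∑ j, marg1 P j * φ₁ j ^ 2 :=
      sum_fst P (fun j => φ₁ j ^ 2)
    rw [this, hφ1b]
  · have : ∑ x : Fin K1 × Fin K2, P x * (φ₂ x.2) ^ 2 = ∑ j', marg2 P j' * φ₂ j' ^ 2 :=
      sum_snd P (fun j' => φ₂ j' ^ 2)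
    rw [this, hφ2b]

lemma mcPmf_nonneg (hK1 : 2 ≤ K1) (hK2 : 2 ≤ K2) {P : Fin K1 × Fin K2 → ℝ}
    (hP0 : ∀ x, 0 ≤ P x) (hP1 : ∑ x, P x = 1) {γ : ℝ} (hγ : 0 < γ)
    (hm1 : ∀ j, γ ≤ marg1 P j) (hm2 : ∀ j', γ ≤ marg2 P j') :
    0 ≤ mcPmf P := by
  obtain ⟨r, hr⟩ := exists_mem_mcSet hK1 hK2 hP1 hγ hm1 hm2
  rw [mcPmf_eq]
  rcases le_or_gt 0 r with h | h
  · exact h.trans (le_csSup (bddAbove_mcSet hP0) hr)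
  · have := le_csSup (bddAbove_mcSet hP0) (neg_mem_mcSet hr)
    linarith

lemma phi_bound_fst {P : Fin K1 × Fin K2 → ℝ} {γ : ℝ} (hγ : 0 < γ)
    (hm1 : ∀ j, γ ≤ marg1 P j) {φ : Fin K1 → ℝ}
    (h1 : ∑ x : Fin K1 × Fin K2, P x * (φ x.1) ^ 2 = 1) :
    ∀ j, |φ j| ≤ Real.sqrt γ⁻¹ := by
  intro j
  have h2 : ∑ j', marg1 P j' * φ j' ^ 2 = 1 := by
    have e : ∑ x : Fin K1 × Fin K2, P x * (φ x.1) ^ 2 = ∑ j', marg1 P j' * φ j' ^ 2 :=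
      sum_fst P (fun j' => φ j' ^ 2)
    rw [← e]; exact h1
  have hterm : marg1 P j * φ j ^ 2 ≤ 1 := by
    rw [← h2]
    exact Finset.single_le_sum
      (fun i _ => mul_nonneg (le_trans hγ.le (hm1 i)) (sq_nonneg _)) (Finset.mem_univ j)
  have hsq : φ j ^ 2 ≤ γ⁻¹ := by
    rw [← mul_le_mul_iff_right₀ hγ, mul_inv_cancel₀ hγ.ne']
    nlinarith [hm1 j, sq_nonneg (φ j)]
  rw [← Real.sqrt_sq_eq_abs]
  exact Real.sqrt_le_sqrt hsq

lemma phi_bound_snd {P : Fin K1 × Fin K2 → ℝ} {γ : ℝ} (hγ : 0 < γ)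
    (hm2 : ∀ j', γ ≤ marg2 P j') {φ : Fin K2 → ℝ}
    (h1 : ∑ x : Fin K1 × Fin K2, P x * (φ x.2) ^ 2 = 1) :
    ∀ j', |φ j'| ≤ Real.sqrt γ⁻¹ := by
  intro j
  have h2 : ∑ j', marg2 P j' * φ j' ^ 2 = 1 := by
    have e : ∑ x : Fin K1 × Fin K2, P x * (φ x.2) ^ 2 = ∑ j', marg2 P j' * φ j' ^ 2 :=
      sum_snd P (fun j' => φ j' ^ 2)
    rw [← e]; exact h1
  have hterm : marg2 P j * φ j ^ 2 ≤ 1 := by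
    rw [← h2]
    exact Finset.single_le_sum
      (fun i _ => mul_nonneg (le_trans hγ.le (hm2 i)) (sq_nonneg _)) (Finset.mem_univ j)
  have hsq : φ j ^ 2 ≤ γ⁻¹ := by
    rw [← mul_le_mul_iff_right₀ hγ, mul_inv_cancel₀ hγ.ne']
    nlinarith [hm2 j, sq_nonneg (φ j)]
  rw [← Real.sqrt_sq_eq_abs]
  exact Real.sqrt_le_sqrt hsq

lemma sum_diff_le {P Q : Fin K1 × Fin K2 → ℝ} (ψ : Fin K1 × Fin K2 → ℝ) (Bb : ℝ) {s : ℝ}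
    (hBb : 0 ≤ Bb) (hψ : ∀ x, |ψ x| ≤ Bb) (hd : ∑ x, |Q x - P x| ≤ s) :
    |(∑ x, Q x * ψ x) - ∑ x, P x * ψ x| ≤ s * Bb := by
  rw [← Finset.sum_sub_distrib]
  calc |∑ x : Fin K1 × Fin K2, (Q x * ψ x - P x * ψ x)|
      ≤ ∑ x : Fin K1 × Fin K2, |Q x * ψ x - P x * ψ x| :=
        Finset.abs_sum_le_sum_abs _ _
    _ ≤ ∑ x : Fin K1 × Fin K2, |Q x - P x| * Bb := by
        refine Finset.sum_le_sum fun x _ => ?_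
        rw [← sub_mul, abs_mul]
        exact mul_le_mul_of_nonneg_left (hψ x) (abs_nonneg _)
    _ = (∑ x : Fin K1 × Fin K2, |Q x - P x|) * Bb := (Finset.sum_mul _ _ _).symm
    _ ≤ s * Bb := mul_le_mul_of_nonneg_right hd hBb


lemma mc_le_aux (hK1 : 2 ≤ K1) (hK2 : 2 ≤ K2) (P Q : Fin K1 × Fin K2 → ℝ)
    (hP0 : ∀ x, 0 ≤ P x) (hP1 : ∑ x, P x = 1) (hQ0 : ∀ x, 0 ≤ Q x) (hQ1 : ∑ x, Q x = 1)
    (γ : ℝ) (hγ : 0 < γ)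
    (hPm1 : ∀ j, γ ≤ marg1 P j) (hPm2 : ∀ j', γ ≤ marg2 P j')
    (hQm1 : ∀ j, γ ≤ marg1 Q j) (hQm2 : ∀ j', γ ≤ marg2 Q j')
    (s : ℝ) (hs0 : 0 ≤ s) (hsγ : s ≤ γ / 4)
    (hd : ∑ x, |Q x - P x| ≤ s) :
    mcPmf P ≤ mcPmf Q + 10 * (s / γ) := by
  have hγhalf : γ ≤ 1 / 2 := by
    have h0 : (0:ℕ) < K1 := by omega
    have h1 : (1:ℕ) < K1 := by omega
    set j0 : Fin K1 := ⟨0, h0⟩ with hj0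
    set j1 : Fin K1 := ⟨1, h1⟩ with hj1
    have hne : j1 ≠ j0 := by simp [hj0, hj1, Fin.ext_iff]
    have hsplit := Finset.add_sum_erase Finset.univ (marg1 P) (Finset.mem_univ j0)
    have h2 : marg1 P j1 ≤ ∑ j ∈ Finset.univ.erase j0, marg1 P j :=
      Finset.single_le_sum (fun i _ => le_trans hγ.le (hPm1 i))
        (Finset.mem_erase.2 ⟨hne, Finset.mem_univ _⟩)
    have h3 : ∑ j, marg1 P j = 1 := by rw [sum_marg1]; exact hP1
    rw [h3] at hsplit
    have := hPm1 j0; have := hPm1 j1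
    linarith
  have hbddQ : BddAbove (mcSet Q) := bddAbove_mcSet hQ0
  have hQnn : 0 ≤ mcPmf Q := mcPmf_nonneg hK1 hK2 hQ0 hQ1 hγ hQm1 hQm2
  rw [mcPmf_eq P]
  have hrhs : 0 ≤ mcPmf Q + 10 * (s / γ) := by positivity
  refine Real.sSup_le (fun r hr => ?_) hrhs
  have habsr : |r| ≤ 1 := abs_le_one_of_mem hP0 hr
  obtain ⟨φ₁, φ₂, m1, m2, sq1, sq2, hrdef⟩ := hr
  obtain ⟨B, hBdef⟩ : ∃ b : ℝ, b = Real.sqrt γ⁻¹ := ⟨_, rfl⟩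
  have hB2 : B ^ 2 = γ⁻¹ := by rw [hBdef]; exact Real.sq_sqrt (by positivity)
  have hB0 : 0 ≤ B := hBdef ▸ Real.sqrt_nonneg _
  have hb1 : ∀ j, |φ₁ j| ≤ B := hBdef ▸ phi_bound_fst hγ hPm1 sq1
  have hb2 : ∀ j', |φ₂ j'| ≤ B := hBdef ▸ phi_bound_snd hγ hPm2 sq2
  clear hBdef
  obtain ⟨a1, ha1def⟩ : ∃ a : ℝ, a = ∑ x : Fin K1 × Fin K2, Q x * φ₁ x.1 := ⟨_, rfl⟩
  obtain ⟨a2, ha2def⟩ : ∃ a : ℝ, a = ∑ x : Fin K1 × Fin K2, Q x * φ₂ x.2 := ⟨_, rfl⟩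
  obtain ⟨q1, hq1def⟩ : ∃ a : ℝ, a = ∑ x : Fin K1 × Fin K2, Q x * (φ₁ x.1) ^ 2 := ⟨_, rfl⟩
  obtain ⟨q2, hq2def⟩ : ∃ a : ℝ, a = ∑ x : Fin K1 × Fin K2, Q x * (φ₂ x.2) ^ 2 := ⟨_, rfl⟩
  obtain ⟨u, hudef⟩ : ∃ a : ℝ, a = ∑ x : Fin K1 × Fin K2, Q x * (φ₁ x.1 * φ₂ x.2) := ⟨_, rfl⟩
  have e1 : |a1| ≤ s * B := by
    have := sum_diff_le (P := P) (Q := Q) (fun x => φ₁ x.1) B hB0 (fun x => hb1 x.1) hd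
    rw [m1, sub_zero, ← ha1def] at this
    exact this
  have e2 : |a2| ≤ s * B := by
    have := sum_diff_le (P := P) (Q := Q) (fun x => φ₂ x.2) B hB0 (fun x => hb2 x.2) hd
    rw [m2, sub_zero, ← ha2def] at this
    exact this
  have e3 : |q1 - 1| ≤ s * B ^ 2 := by
    have := sum_diff_le (P := P) (Q := Q) (fun x => (φ₁ x.1) ^ 2) (B ^ 2) (by positivity)
      (fun x => by rw [abs_pow, sq_abs, ← sq_abs]; exact pow_le_pow_left₀ (abs_nonneg _) (hb1 x.1) 2) hd
    rw [sq1, ← hq1def] at this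
    exact this
  have e4 : |q2 - 1| ≤ s * B ^ 2 := by
    have := sum_diff_le (P := P) (Q := Q) (fun x => (φ₂ x.2) ^ 2) (B ^ 2) (by positivity)
      (fun x => by rw [abs_pow, sq_abs, ← sq_abs]; exact pow_le_pow_left₀ (abs_nonneg _) (hb2 x.2) 2) hd
    rw [sq2, ← hq2def] at this
    exact this
  have e5 : |u - r| ≤ s * B ^ 2 := by
    have := sum_diff_le (P := P) (Q := Q) (fun x => φ₁ x.1 * φ₂ x.2) (B ^ 2) (by positivity)
      (fun x => by
        rw [abs_mul]
        calc |φ₁ x.1| * |φ₂ x.2| ≤ B * B :=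
              mul_le_mul (hb1 x.1) (hb2 x.2) (abs_nonneg _) hB0
          _ = B ^ 2 := (sq B).symm) hd
    rw [← hrdef, ← hudef] at this
    exact this
  obtain ⟨θ, hθdef⟩ : ∃ a : ℝ, a = s * B ^ 2 := ⟨_, rfl⟩
  rw [← hθdef] at e3 e4 e5
  have hθγ : θ = s / γ := by rw [hθdef, hB2, div_eq_mul_inv]
  have hθ0 : 0 ≤ θ := by rw [hθγ]; positivity
  have hθ4 : θ ≤ 1 / 4 := by
    rw [hθγ, div_le_iff₀ hγ]
    linarith
  have hs8 : s ≤ 1 / 8 := le_trans hsγ (by linarith)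
  have ha1sq : a1 ^ 2 ≤ θ / 8 := by
    have h : a1 ^ 2 ≤ (s * B) ^ 2 := by
      rw [← sq_abs a1]
      exact pow_le_pow_left₀ (abs_nonneg _) e1 2
    have h2 : (s * B) ^ 2 = s * θ := by rw [hθdef]; ring
    have h3 : s * θ ≤ (1 / 8) * θ := mul_le_mul_of_nonneg_right hs8 hθ0
    linarith
  have ha2sq : a2 ^ 2 ≤ θ / 8 := by
    have h : a2 ^ 2 ≤ (s * B) ^ 2 := by
      rw [← sq_abs a2]
      exact pow_le_pow_left₀ (abs_nonneg _) e2 2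
    have h2 : (s * B) ^ 2 = s * θ := by rw [hθdef]; ring
    have h3 : s * θ ≤ (1 / 8) * θ := mul_le_mul_of_nonneg_right hs8 hθ0
    linarith
  have he3 := abs_le.1 e3
  have he4 := abs_le.1 e4
  have he5 := abs_le.1 e5
  obtain ⟨v1, hv1def⟩ : ∃ a : ℝ, a = q1 - a1 ^ 2 := ⟨_, rfl⟩
  obtain ⟨v2, hv2def⟩ : ∃ a : ℝ, a = q2 - a2 ^ 2 := ⟨_, rfl⟩
  have hv1l : 1 - 9 / 8 * θ ≤ v1 := by
    rw [hv1def]; linarith only [he3.1, ha1sq]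
  have hv1u : v1 ≤ 1 + θ := by
    rw [hv1def]; linarith only [he3.2, sq_nonneg a1]
  have hv2l : 1 - 9 / 8 * θ ≤ v2 := by
    rw [hv2def]; linarith only [he4.1, ha2sq]
  have hv2u : v2 ≤ 1 + θ := by
    rw [hv2def]; linarith only [he4.2, sq_nonneg a2]
  have hv1half : 1 / 2 ≤ v1 := by linarith only [hv1l, hθ4, hθ0]
  have hv2half : 1 / 2 ≤ v2 := by linarith only [hv2l, hθ4, hθ0]
  have hv1pos : 0 < v1 := by linarith
  have hv2pos : 0 < v2 := by linarith
  obtain ⟨w1, hw1def⟩ : ∃ a : ℝ, a = Real.sqrt v1 := ⟨_, rfl⟩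
  obtain ⟨w2, hw2def⟩ : ∃ a : ℝ, a = Real.sqrt v2 := ⟨_, rfl⟩
  have hw1sq : w1 ^ 2 = v1 := by rw [hw1def]; exact Real.sq_sqrt hv1pos.le
  have hw2sq : w2 ^ 2 = v2 := by rw [hw2def]; exact Real.sq_sqrt hv2pos.le
  have hw1pos : 0 < w1 := by rw [hw1def]; exact Real.sqrt_pos.2 hv1pos
  have hw2pos : 0 < w2 := by rw [hw2def]; exact Real.sqrt_pos.2 hv2pos
  clear hw1def hw2def
  -- normalized witnesses for Q
  have mem' : (u - a1 * a2) / (w1 * w2) ∈ mcSet Q := by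
    refine ⟨fun j => (φ₁ j - a1) / w1, fun j' => (φ₂ j' - a2) / w2, ?_, ?_, ?_, ?_, ?_⟩
    · have hpt : ∀ x : Fin K1 × Fin K2, Q x * ((φ₁ x.1 - a1) / w1)
          = (Q x * φ₁ x.1 - Q x * a1) / w1 := fun x => by ring
      simp only [hpt]
      rw [← Finset.sum_div, Finset.sum_sub_distrib, ← ha1def, ← Finset.sum_mul, hQ1, one_mul,
        sub_self, zero_div]
    · have hpt : ∀ x : Fin K1 × Fin K2, Q x * ((φ₂ x.2 - a2) / w2)
          = (Q x * φ₂ x.2 - Q x * a2) / w2 := fun x => by ring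
      simp only [hpt]
      rw [← Finset.sum_div, Finset.sum_sub_distrib, ← ha2def, ← Finset.sum_mul, hQ1, one_mul,
        sub_self, zero_div]
    · have hpt : ∀ x : Fin K1 × Fin K2, Q x * ((φ₁ x.1 - a1) / w1) ^ 2
          = (Q x * (φ₁ x.1) ^ 2 - 2 * a1 * (Q x * φ₁ x.1) + a1 ^ 2 * Q x) / v1 := by
        intro x
        rw [div_pow, hw1sq]
        ring
      simp only [hpt]
      rw [← Finset.sum_div, Finset.sum_add_distrib, Finset.sum_sub_distrib, ← hq1def,
        ← Finset.mul_sum, ← ha1def, ← Finset.mul_sum, hQ1, mul_one,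
        div_eq_one_iff_eq hv1pos.ne']
      rw [hv1def]; ring
    · have hpt : ∀ x : Fin K1 × Fin K2, Q x * ((φ₂ x.2 - a2) / w2) ^ 2
          = (Q x * (φ₂ x.2) ^ 2 - 2 * a2 * (Q x * φ₂ x.2) + a2 ^ 2 * Q x) / v2 := by
        intro x
        rw [div_pow, hw2sq]
        ring
      simp only [hpt]
      rw [← Finset.sum_div, Finset.sum_add_distrib, Finset.sum_sub_distrib, ← hq2def,
        ← Finset.mul_sum, ← ha2def, ← Finset.mul_sum, hQ1, mul_one,
        div_eq_one_iff_eq hv2pos.ne']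
      rw [hv2def]; ring
    · have hpt : ∀ x : Fin K1 × Fin K2, Q x * ((φ₁ x.1 - a1) / w1 * ((φ₂ x.2 - a2) / w2))
          = (Q x * (φ₁ x.1 * φ₂ x.2) - a2 * (Q x * φ₁ x.1) - a1 * (Q x * φ₂ x.2)
              + a1 * a2 * Q x) / (w1 * w2) := by
        intro x
        field_simp
        ring
      simp only [hpt]
      rw [← Finset.sum_div, Finset.sum_add_distrib, Finset.sum_sub_distrib,
        Finset.sum_sub_distrib, ← hudef, ← Finset.mul_sum, ← ha1def, ← Finset.mul_sum,
        ← ha2def, ← Finset.mul_sum, hQ1, mul_one]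
      rw [div_eq_div_iff (by positivity) (by positivity)]
      ring
  have hr'le : (u - a1 * a2) / (w1 * w2) ≤ mcPmf Q := by
    rw [mcPmf_eq Q]
    exact le_csSup hbddQ mem'
  -- numeric assembly
  clear hd m1 m2 sq1 sq2 hrdef ha1def ha2def hq1def hq2def hudef hb1 hb2 mem'
  clear e1 e2 e3 e4 e5 hv1def hv2def hB2 hB0 hsγ hs8 hs0 hθdef hγ hγhalf
  clear hP0 hP1 hQ0 hQ1 hPm1 hPm2 hQm1 hQm2 hbddQ hQnn φ₁ φ₂ B
  have ha12 : |a1 * a2| ≤ θ / 8 := by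
    have hsq : (a1 * a2) ^ 2 ≤ (θ / 8) ^ 2 := by
      have h := mul_le_mul ha1sq ha2sq (sq_nonneg a2) (by linarith only [hθ0] : (0:ℝ) ≤ θ / 8)
      linarith only [h]
    rw [← Real.sqrt_sq_eq_abs]
    exact (Real.sqrt_le_sqrt hsq).trans_eq (Real.sqrt_sq (by linarith only [hθ0]))
  have hu'r : |u - a1 * a2 - r| ≤ 9 / 8 * θ := by
    have h := abs_add_le (u - r) (-(a1 * a2))
    rw [abs_neg] at h
    have heq : u - a1 * a2 - r = u - r + -(a1 * a2) := by ring
    rw [heq]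
    refine h.trans ?_
    have e5' : |u - r| ≤ θ := abs_le.2 he5
    linarith only [e5', ha12]
  have hu'abs : |u - a1 * a2| ≤ 2 := by
    have h1 := abs_le.1 hu'r
    have h2 := abs_le.1 habsr
    rw [abs_le]
    constructor <;> linarith only [h1.1, h1.2, h2.1, h2.2, hθ4, hθ0]
  obtain ⟨W, hWdef⟩ : ∃ a : ℝ, a = w1 * w2 := ⟨_, rfl⟩
  have hWpos : 0 < W := hWdef ▸ mul_pos hw1pos hw2pos
  have hWsq : W ^ 2 = v1 * v2 := by rw [hWdef, mul_pow, hw1sq, hw2sq]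
  have hvv : |v1 * v2 - 1| ≤ 3 * θ := by
    rw [abs_le]
    have hl := mul_le_mul hv1l hv2l
      (by linarith only [hθ4, hθ0] : (0:ℝ) ≤ 1 - 9 / 8 * θ)
      (by linarith only [hv1half] : (0:ℝ) ≤ v1)
    have hup := mul_le_mul hv1u hv2u
      (by linarith only [hv2half] : (0:ℝ) ≤ v2)
      (by linarith only [hθ0] : (0:ℝ) ≤ 1 + θ)
    have hθsq : θ * θ ≤ (1 / 4) * θ := mul_le_mul_of_nonneg_right hθ4 hθ0
    constructor
    · linarith only [hl, sq_nonneg θ, hθ0, hθ4]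
    · linarith only [hup, hθsq, hθ0]
  have hWhalf : 1 / 2 ≤ W := by
    have h14 : (1:ℝ) / 4 ≤ v1 * v2 := by
      have := mul_le_mul hv1half hv2half (by norm_num) (by linarith only [hv1half])
      linarith only [this]
    have h := Real.sqrt_le_sqrt ((by linarith only [h14, hWsq]) : (1:ℝ)/4 ≤ W ^ 2)
    rw [show (1:ℝ)/4 = (1/2)^2 by norm_num, Real.sqrt_sq (by norm_num : (0:ℝ) ≤ 1/2),
      Real.sqrt_sq hWpos.le] at h
    exact h
  have hW1 : |W - 1| ≤ 2 * θ := by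
    have hfac : |W - 1| * (W + 1) = |v1 * v2 - 1| := by
      rw [← hWsq, show W ^ 2 - 1 = (W - 1) * (W + 1) by ring, abs_mul,
        abs_of_pos (by linarith only [hWpos] : (0:ℝ) < W + 1)]
    have h5 : |W - 1| * (3 / 2) ≤ |W - 1| * (W + 1) :=
      mul_le_mul_of_nonneg_left (by linarith only [hWhalf]) (abs_nonneg _)
    rw [hfac] at h5
    linarith only [h5, hvv, abs_nonneg (W - 1)]
  have hfrac : |(u - a1 * a2) - (u - a1 * a2) / W| ≤ 8 * θ := by
    have hrw : (u - a1 * a2) - (u - a1 * a2) / W = (u - a1 * a2) * (W - 1) / W := by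
      field_simp [hWpos.ne']
    rw [hrw, abs_div, abs_mul, abs_of_pos hWpos, div_le_iff₀ hWpos]
    have h1 : |u - a1 * a2| * |W - 1| ≤ 2 * (2 * θ) :=
      mul_le_mul hu'abs hW1 (abs_nonneg _) (by norm_num)
    have h2 : 8 * θ * (1 / 2) ≤ 8 * θ * W :=
      mul_le_mul_of_nonneg_left hWhalf (by linarith only [hθ0])
    linarith only [h1, h2]
  have hfinal : r ≤ (u - a1 * a2) / W + 10 * θ := by
    have h1 := abs_le.1 hu'r
    have h2 := abs_le.1 hfrac
    linarith
  rw [← hθγ]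
  calc r ≤ (u - a1 * a2) / W + 10 * θ := hfinal
    _ ≤ mcPmf Q + 10 * θ := by
        rw [hWdef]
        linarith [hr'le]


section Prob

variable {Ω : Type*} [MeasurableSpace Ω] {μ : Measure Ω} [IsProbabilityMeasure μ]
variable {K1 K2 : ℕ}

lemma comp_repr (Z : Ω → Fin K1 × Fin K2) (f : Fin K1 × Fin K2 → ℝ) (ω : Ω) :
    f (Z ω) = ∑ x : Fin K1 × Fin K2, Set.indicator {ω' | Z ω' = x} (fun _ => f x) ω := by
  have : ∀ x : Fin K1 × Fin K2,
      Set.indicator {ω' | Z ω' = x} (fun _ => f x) ω = if Z ω = x then f x else 0 := by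
    intro x
    rw [Set.indicator_apply]
    rfl
  simp only [this]
  rw [Finset.sum_ite_eq]
  simp

lemma integrable_comp (Z : Ω → Fin K1 × Fin K2) (hZ : Measurable Z)
    (f : Fin K1 × Fin K2 → ℝ) : Integrable (fun ω => f (Z ω)) μ := by
  have : (fun ω => f (Z ω))
      = fun ω => ∑ x : Fin K1 × Fin K2, Set.indicator {ω' | Z ω' = x} (fun _ => f x) ω :=
    funext fun ω => comp_repr Z f ω
  rw [this]
  refine integrable_finset_sum _ fun x _ => ?_
  refine (integrable_indicator_iff (hZ (measurableSet_singleton x))).2 ?_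
  exact integrableOn_const (C := f x) (measure_lt_top μ _).ne

lemma integral_comp (Z : Ω → Fin K1 × Fin K2) (hZ : Measurable Z)
    (f : Fin K1 × Fin K2 → ℝ) :
    ∫ ω, f (Z ω) ∂μ = ∑ x : Fin K1 × Fin K2, (μ {ω | Z ω = x}).toReal * f x := by
  have hrep : (fun ω => f (Z ω))
      = fun ω => ∑ x : Fin K1 × Fin K2, Set.indicator {ω' | Z ω' = x} (fun _ => f x) ω :=
    funext fun ω => comp_repr Z f ω
  rw [hrep, integral_finset_sum]
  · refine Finset.sum_congr rfl fun x _ => ?_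
    exact integral_indicator_const (f x) (hZ (measurableSet_singleton x))
  · intro x _
    refine (integrable_indicator_iff (hZ (measurableSet_singleton x))).2 ?_
    exact integrableOn_const (C := f x) (measure_lt_top μ _).ne

lemma bern_mgf_bound {p lam : ℝ} (hp0 : 0 ≤ p) (hp1 : p ≤ 1) (hl0 : 0 ≤ lam) (hl1 : lam ≤ 1) :
    Real.exp (-(lam * p)) * (p * Real.exp lam + (1 - p)) ≤ Real.exp (2 * lam ^ 2) := by
  have hq : p * Real.exp lam + (1 - p) = 1 + p * (Real.exp lam - 1) := by ring
  have h1 : 1 + p * (Real.exp lam - 1) ≤ Real.exp (p * (Real.exp lam - 1)) := by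
    have := Real.add_one_le_exp (p * (Real.exp lam - 1))
    linarith
  have hexp1 : Real.exp lam - 1 - lam ≤ lam ^ 2 := by
    have hb := Real.exp_bound' hl0 hl1 (n := 2) (by norm_num)
    have : (∑ m ∈ Finset.range 2, lam ^ m / m.factorial) = 1 + lam := by
      simp [Finset.sum_range_succ]
    rw [this] at hb
    norm_num at hb
    nlinarith [sq_nonneg lam]
  have hexp0 : 0 ≤ Real.exp lam - 1 - lam := by
    have := Real.add_one_le_exp lam
    linarith
  calc Real.exp (-(lam * p)) * (p * Real.exp lam + (1 - p))
      ≤ Real.exp (-(lam * p)) * Real.exp (p * (Real.exp lam - 1)) := by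
        rw [hq]
        exact mul_le_mul_of_nonneg_left h1 (Real.exp_nonneg _)
    _ = Real.exp (p * (Real.exp lam - 1 - lam)) := by
        rw [← Real.exp_add]
        congr 1
        ring
    _ ≤ Real.exp (2 * lam ^ 2) := by
        apply Real.exp_le_exp.2
        have h2 : p * (Real.exp lam - 1 - lam) ≤ 1 * (Real.exp lam - 1 - lam) :=
          mul_le_mul_of_nonneg_right hp1 hexp0
        nlinarith [sq_nonneg lam]

lemma chernoff_A {m : ℕ} (Y : Fin m → Ω → Fin K1 × Fin K2) (hYmeas : ∀ s, Measurable (Y s))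
    (hiid : iIndepFun Y μ)
    (P : Fin K1 × Fin K2 → ℝ) (hP0 : ∀ x, 0 ≤ P x) (hP1 : ∑ x, P x = 1)
    (hlaw : ∀ (s : Fin m) (x : Fin K1 × Fin K2), (μ {ω | Y s ω = x}).toReal = P x)
    (A : Finset (Fin K1 × Fin K2)) (lam c : ℝ) (hl0 : 0 ≤ lam) (hl1 : lam ≤ 1) :
    (μ {ω | c ≤ ∑ t : Fin m,
        ((if Y t ω ∈ A then (1:ℝ) else 0) - ∑ y ∈ A, P y)}).toReal
      ≤ Real.exp (-lam * c + m * (2 * lam ^ 2)) := by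
  classical
  set pA : ℝ := ∑ y ∈ A, P y with hpA
  have hpA0 : 0 ≤ pA := Finset.sum_nonneg fun y _ => hP0 y
  have hpA1 : pA ≤ 1 := by
    rw [hpA, ← hP1]
    exact Finset.sum_le_sum_of_subset_of_nonneg (Finset.subset_univ A) fun x _ _ => hP0 x
  set g : Fin K1 × Fin K2 → ℝ := fun x => (if x ∈ A then (1:ℝ) else 0) - pA with hg
  have hgmeas : Measurable g := measurable_of_countable g
  have hindep : iIndepFun (fun t => g ∘ Y t) μ :=
    hiid.comp (fun _ => g) (fun _ => hgmeas)
  have hXmeas : ∀ t, Measurable (g ∘ Y t) := fun t => hgmeas.comp (hYmeas t)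
  have hintt : ∀ t : Fin m, Integrable (fun ω => Real.exp (lam * (g ∘ Y t) ω)) μ := fun t =>
    integrable_comp (Y t) (hYmeas t) (fun x => Real.exp (lam * g x))
  have hint : Integrable (fun ω => Real.exp (lam * (∑ t : Fin m, g ∘ Y t) ω)) μ :=
    hindep.integrable_exp_mul_sum hXmeas (fun t _ => hintt t)
  have hset : {ω | c ≤ ∑ t : Fin m, ((if Y t ω ∈ A then (1:ℝ) else 0) - pA)}
      = {ω | c ≤ (∑ t : Fin m, g ∘ Y t) ω} := by
    ext ω
    simp only [Set.mem_setOf_eq, Finset.sum_apply, Function.comp_apply, hg]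
  have hchern := measure_ge_le_exp_mul_mgf (μ := μ) (X := ∑ t : Fin m, g ∘ Y t) c hl0 hint
  rw [hset]
  refine hchern.trans ?_
  rw [hindep.mgf_sum hXmeas Finset.univ]
  have hmgf_t : ∀ t : Fin m, mgf (g ∘ Y t) μ lam ≤ Real.exp (2 * lam ^ 2) := by
    intro t
    have hcalc : mgf (g ∘ Y t) μ lam
        = ∑ x : Fin K1 × Fin K2, P x * Real.exp (lam * g x) := by
      calc mgf (g ∘ Y t) μ lam = ∫ ω, Real.exp (lam * g (Y t ω)) ∂μ := rfl
        _ = ∑ x : Fin K1 × Fin K2, (μ {ω | Y t ω = x}).toReal * Real.exp (lam * g x) :=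
            integral_comp (μ := μ) (Y t) (hYmeas t) (fun x => Real.exp (lam * g x))
        _ = ∑ x : Fin K1 × Fin K2, P x * Real.exp (lam * g x) :=
            Finset.sum_congr rfl fun x _ => by rw [hlaw t x]
    have hsplit : ∑ x : Fin K1 × Fin K2, P x * Real.exp (lam * g x)
        = Real.exp (-(lam * pA)) * (pA * Real.exp lam + (1 - pA)) := by
      have hterm : ∀ x : Fin K1 × Fin K2, P x * Real.exp (lam * g x)
          = Real.exp (-(lam * pA)) * (if x ∈ A then P x * Real.exp lam else P x) := by
        intro x
        rw [show g x = (if x ∈ A then (1:ℝ) else 0) - pA from rfl]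
        split_ifs with h
        · rw [show lam * ((1:ℝ) - pA) = lam + -(lam * pA) by ring, Real.exp_add]
          ring
        · rw [show lam * ((0:ℝ) - pA) = -(lam * pA) by ring]
          ring
      simp only [hterm]
      rw [← Finset.mul_sum]
      congr 1
      rw [Finset.sum_ite, ← Finset.sum_mul]
      have hfil : Finset.univ.filter (· ∈ A) = A := by
        ext x; simp
      have hfil2 : ∑ x ∈ Finset.univ.filter (¬ · ∈ A), P x = 1 - pA := by
        have := Finset.sum_filter_add_sum_filter_not Finset.univ (· ∈ A) P
        rw [hfil] at this
        rw [hP1] at this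
        linarith [this]
      rw [hfil, hfil2, ← hpA]
    rw [hcalc, hsplit]
    exact bern_mgf_bound hpA0 hpA1 hl0 hl1
  calc Real.exp (-lam * c) * ∏ t : Fin m, mgf (g ∘ Y t) μ lam
      ≤ Real.exp (-lam * c) * ∏ t : Fin m, Real.exp (2 * lam ^ 2) := by
        refine mul_le_mul_of_nonneg_left ?_ (Real.exp_nonneg _)
        exact Finset.prod_le_prod (fun t _ => mgf_nonneg) (fun t _ => hmgf_t t)
    _ = Real.exp (-lam * c + m * (2 * lam ^ 2)) := by
        rw [Finset.prod_const, Finset.card_univ, Fintype.card_fin, ← Real.exp_nat_mul,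
          ← Real.exp_add]

end Prob

lemma delta_half {K1 K2 : ℕ} (hK1 : 2 ≤ K1) {P : Fin K1 × Fin K2 → ℝ} {δ' : ℝ}
    (hδ : 0 < δ') (hm1 : ∀ j, δ' ≤ marg1 P j) (hP1 : ∑ x, P x = 1) : δ' ≤ 1 / 2 := by
  have h0 : (0:ℕ) < K1 := by omega
  have h1 : (1:ℕ) < K1 := by omega
  set j0 : Fin K1 := ⟨0, h0⟩ with hj0
  set j1 : Fin K1 := ⟨1, h1⟩ with hj1
  have hne : j1 ≠ j0 := by simp [hj0, hj1, Fin.ext_iff]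
  have hsplit := Finset.add_sum_erase Finset.univ (marg1 P) (Finset.mem_univ j0)
  have h2 : marg1 P j1 ≤ ∑ j ∈ Finset.univ.erase j0, marg1 P j :=
    Finset.single_le_sum (fun i _ => le_trans hδ.le (hm1 i))
      (Finset.mem_erase.2 ⟨hne, Finset.mem_univ _⟩)
  have h3 : ∑ j, marg1 P j = 1 := by rw [sum_marg1]; exact hP1
  rw [h3] at hsplit
  have := hm1 j0; have := hm1 j1
  linarith

lemma final_numeric (Kb K1 K2 : ℕ) (hK1 : 2 ≤ K1) (hK2 : 2 ≤ K2)
    (hK1le : K1 ≤ Kb) (hK2le : K2 ≤ Kb)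
    (ε η δ' mR : ℝ) (hε : 0 < ε) (hε1 : ε ≤ 1) (hη : 0 < η) (hη1 : η ≤ 1)
    (hδpos : 0 < δ') (hδhalf : δ' ≤ 1 / 2)
    (hm : 2 * (32 * (Kb : ℝ) ^ 2 / (ε * δ' ^ 2)) ^ 2 * Real.log (16 / η) ≤ mR) :
    (2 : ℝ) ^ (K1 * K2) * Real.exp (-(mR * (ε * δ' / 20) ^ 2 / 32)) ≤ η := by
  have hKb : (2 : ℝ) ≤ (Kb : ℝ) := by exact_mod_cast le_trans hK1 hK1le
  set L : ℝ := Real.log (16 / η) with hLdef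
  have hL0 : 0 ≤ L := Real.log_nonneg (by rw [le_div_iff₀ hη]; linarith)
  set s : ℝ := ε * δ' / 20 with hsdef
  set c : ℝ := 32 * (Kb : ℝ) ^ 2 / (ε * δ' ^ 2) with hcdef
  have hstep : 32 * (Kb : ℝ) ^ 2 ≤ 2 * c ^ 2 * s ^ 2 := by
    have hcs : c * s = 8 * (Kb : ℝ) ^ 2 / (5 * δ') := by
      rw [hcdef, hsdef]
      field_simp
      ring
    have h4 : (4 : ℝ) ≤ (Kb : ℝ) ^ 2 := by nlinarith [hKb]
    have hd2 : δ' ^ 2 ≤ 1 / 4 := by nlinarith [hδhalf, hδpos]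
    have hrw : 2 * c ^ 2 * s ^ 2 = 2 * (c * s) ^ 2 := by ring
    rw [hrw, hcs, div_pow, ← mul_div_assoc, le_div_iff₀ (by positivity)]
    have e1 : 32 * (Kb:ℝ) ^ 2 * (5 * δ') ^ 2 = 800 * ((Kb:ℝ)^2 * δ' ^ 2) := by ring
    have e2 : (2:ℝ) * (8 * (Kb:ℝ) ^ 2) ^ 2 = 128 * ((Kb:ℝ)^2 * (Kb:ℝ)^2) := by ring
    rw [e1, e2]
    have b1 : (Kb:ℝ)^2 * δ' ^ 2 ≤ (Kb:ℝ)^2 * (1/4) :=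
      mul_le_mul_of_nonneg_left hd2 (by positivity)
    have b2 : (Kb:ℝ)^2 * 4 ≤ (Kb:ℝ)^2 * (Kb:ℝ)^2 :=
      mul_le_mul_of_nonneg_left h4 (by positivity)
    nlinarith [b1, b2, sq_nonneg ((Kb:ℝ))]
  have h1 : (Kb : ℝ) ^ 2 * L ≤ mR * s ^ 2 / 32 := by
    have h2 : 2 * c ^ 2 * L * s ^ 2 ≤ mR * s ^ 2 :=
      mul_le_mul_of_nonneg_right hm (sq_nonneg s)
    have h3 : 32 * (Kb : ℝ) ^ 2 * L ≤ 2 * c ^ 2 * s ^ 2 * L :=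
      mul_le_mul_of_nonneg_right hstep hL0
    nlinarith [h2, h3]
  set N : ℕ := Kb ^ 2 with hNdef
  have hcast : ((N : ℕ) : ℝ) = (Kb : ℝ) ^ 2 := by rw [hNdef]; push_cast; ring
  have hexpL : Real.exp (-L) = η / 16 := by
    rw [hLdef, ← Real.log_inv, inv_div]
    exact Real.exp_log (by positivity)
  have h2 : Real.exp (-(mR * s ^ 2 / 32)) ≤ (η / 16) ^ N := by
    calc Real.exp (-(mR * s ^ 2 / 32)) ≤ Real.exp (-((N : ℝ) * L)) := by
          apply Real.exp_le_exp.2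
          rw [hcast]
          linarith [h1]
      _ = (η / 16) ^ N := by
          rw [show -((N : ℝ) * L) = (N : ℝ) * (-L) by ring, Real.exp_nat_mul, hexpL]
  have hNne : N ≠ 0 := by
    have : 0 < Kb := by omega
    exact (pow_pos this 2).ne'
  have hn4 : K1 * K2 ≤ 4 * N := by
    calc K1 * K2 ≤ Kb * Kb := Nat.mul_le_mul hK1le hK2le
      _ = Kb ^ 2 := (sq Kb).symm
      _ ≤ 4 * Kb ^ 2 := by omega
  have hηN : η ^ N ≤ η := pow_le_of_le_one hη.le hη1 hNne
  have h16 : (2 : ℝ) ^ (K1 * K2) ≤ 16 ^ N := by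
    rw [show (16 : ℝ) = 2 ^ 4 by norm_num, ← pow_mul]
    exact pow_le_pow_right₀ (by norm_num) hn4
  have h3 : (2 : ℝ) ^ (K1 * K2) * (η / 16) ^ N ≤ η := by
    have hnum : (2 : ℝ) ^ (K1 * K2) * η ^ N ≤ 16 ^ N * η :=
      mul_le_mul h16 hηN (by positivity) (by positivity)
    calc (2 : ℝ) ^ (K1 * K2) * (η / 16) ^ N = (2 : ℝ) ^ (K1 * K2) * η ^ N / 16 ^ N := by
          rw [div_pow]; ring
      _ ≤ 16 ^ N * η / 16 ^ N := by
          exact (div_le_div_iff_of_pos_right (by positivity)).2 hnum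
      _ = η := by field_simp
  calc (2 : ℝ) ^ (K1 * K2) * Real.exp (-(mR * s ^ 2 / 32))
      ≤ (2 : ℝ) ^ (K1 * K2) * (η / 16) ^ N :=
        mul_le_mul_of_nonneg_left h2 (by positivity)
    _ ≤ η := h3

end SampleMC

open SampleMC in
/-- Sample maximal correlation concentration: with `m` i.i.d. samples,
`m ≥ 2·(32𝒦/(εδ'²))²·log(16/η)` implies `Prob(|ρ^{(m)} − ρ| > ε) ≤ η`, where `𝒦 = K²`. -/
theorem sample_mc_concentration
    {Ω : Type*} [MeasurableSpace Ω] (μ : Measure Ω) [IsProbabilityMeasure μ]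
    (Kb K1 K2 : ℕ) (hK1 : 2 ≤ K1) (hK2 : 2 ≤ K2) (hK1le : K1 ≤ Kb) (hK2le : K2 ≤ Kb)
    (P : Fin K1 × Fin K2 → ℝ) (hP0 : ∀ x, 0 ≤ P x) (hP1 : ∑ x, P x = 1)
    (δ' : ℝ) (hδpos : 0 < δ')
    (hδle1 : ∀ j, δ' ≤ marg1 P j) (hδle2 : ∀ j', δ' ≤ marg2 P j')
    (hδmem : (∃ j, δ' = marg1 P j) ∨ (∃ j', δ' = marg2 P j'))
    (m : ℕ)
    (Y : Fin m → Ω → Fin K1 × Fin K2) (hYmeas : ∀ s, Measurable (Y s))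
    (hiid : iIndepFun Y μ)
    (hlaw : ∀ (s : Fin m) (x : Fin K1 × Fin K2), (μ {ω | Y s ω = x}).toReal = P x)
    (ε η : ℝ) (hε : 0 < ε) (hε1 : ε ≤ 1) (hη : 0 < η) (hη1 : η ≤ 1)
    (hm : 2 * (32 * (Kb : ℝ) ^ 2 / (ε * δ' ^ 2)) ^ 2 * Real.log (16 / η) ≤ (m : ℝ)) :
    (μ {ω | ε < |mcPmf (empPmf2 m Y ω) - mcPmf P|}).toReal ≤ η := by
  classical
  have hδhalf : δ' ≤ 1 / 2 := delta_half hK1 hδpos hδle1 hP1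
  set s : ℝ := ε * δ' / 20 with hsdef
  have hs0 : 0 < s := by rw [hsdef]; positivity
  set γ : ℝ := δ' / 2 with hγdef
  have hγ0 : 0 < γ := by rw [hγdef]; positivity
  -- m is positive
  have hL0 : (0:ℝ) < Real.log (16 / η) :=
    Real.log_pos (by rw [lt_div_iff₀ hη]; linarith)
  have hKbpos : (0:ℝ) < (Kb:ℝ) := by
    have : (2:ℝ) ≤ (Kb:ℝ) := by exact_mod_cast le_trans hK1 hK1le
    linarith
  have hmRpos : (0:ℝ) < (m:ℝ) := by
    refine lt_of_lt_of_le ?_ hm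
    positivity
  have hm0 : (m:ℝ) ≠ 0 := hmRpos.ne'
  -- empirical pmf facts
  have hQ0 : ∀ ω x, 0 ≤ empPmf2 m Y ω x := by
    intro ω x
    unfold empPmf2
    refine mul_nonneg (by positivity) (Finset.sum_nonneg fun t _ => by positivity)
  have hQ1 : ∀ ω, ∑ x, empPmf2 m Y ω x = 1 := by
    intro ω
    unfold empPmf2
    rw [← Finset.mul_sum, Finset.sum_comm]
    have h : ∀ t : Fin m, ∑ x : Fin K1 × Fin K2, (if Y t ω = x then (1:ℝ) else 0) = 1 := by
      intro t
      rw [Finset.sum_ite_eq]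
      simp
    rw [Finset.sum_congr rfl fun t _ => h t, Finset.sum_const, Finset.card_univ,
      Fintype.card_fin, nsmul_eq_mul, mul_one, inv_mul_cancel₀ hm0]
  -- step 1: event inclusion into L1-deviation event
  have hsub : {ω | ε < |mcPmf (empPmf2 m Y ω) - mcPmf P|}
      ⊆ {ω | s < ∑ x, |empPmf2 m Y ω x - P x|} := by
    intro ω hω
    simp only [Set.mem_setOf_eq] at hω ⊢
    by_contra hc
    push_neg at hc
    have hsδ : s ≤ δ' / 2 := by
      rw [hsdef]
      nlinarith [mul_le_mul_of_nonneg_right hε1 hδpos.le]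
    set Q : Fin K1 × Fin K2 → ℝ := empPmf2 m Y ω with hQdef
    -- marginal bounds for Q
    have hmargQ1 : ∀ j, γ ≤ marg1 Q j := by
      intro j
      have hdiff : |marg1 Q j - marg1 P j| ≤ ∑ x, |Q x - P x| := by
        rw [marg1, marg1, ← Finset.sum_sub_distrib]
        refine (Finset.abs_sum_le_sum_abs _ _).trans ?_
        have hexp : ∑ x : Fin K1 × Fin K2, |Q x - P x|
            = ∑ j'' : Fin K1, ∑ j' : Fin K2, |Q (j'', j') - P (j'', j')| := by
          rw [Fintype.sum_prod_type]
        rw [hexp]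
        exact Finset.single_le_sum
          (f := fun j'' => ∑ j' : Fin K2, |Q (j'', j') - P (j'', j')|)
          (fun i _ => Finset.sum_nonneg fun j' _ => abs_nonneg _) (Finset.mem_univ j)
      have := abs_le.1 hdiff
      have := hδle1 j
      rw [hγdef]
      linarith [hc, hsδ]
    have hmargQ2 : ∀ j', γ ≤ marg2 Q j' := by
      intro j
      have hdiff : |marg2 Q j - marg2 P j| ≤ ∑ x, |Q x - P x| := by
        rw [marg2, marg2, ← Finset.sum_sub_distrib]
        refine (Finset.abs_sum_le_sum_abs _ _).trans ?_
        have hexp : ∑ x : Fin K1 × Fin K2, |Q x - P x|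
            = ∑ j' : Fin K2, ∑ j'' : Fin K1, |Q (j'', j') - P (j'', j')| := by
          rw [Fintype.sum_prod_type_right]
        rw [hexp]
        exact Finset.single_le_sum
          (f := fun j' => ∑ j'' : Fin K1, |Q (j'', j') - P (j'', j')|)
          (fun i _ => Finset.sum_nonneg fun j'' _ => abs_nonneg _) (Finset.mem_univ j)
      have := abs_le.1 hdiff
      have := hδle2 j
      rw [hγdef]
      linarith [hc, hsδ]
    have hmargP1 : ∀ j, γ ≤ marg1 P j := fun j => le_trans (by rw [hγdef]; linarith) (hδle1 j)
    have hmargP2 : ∀ j', γ ≤ marg2 P j' := fun j' => le_trans (by rw [hγdef]; linarith) (hδle2 j')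
    have hsγ : s ≤ γ / 4 := by
      rw [hsdef, hγdef]
      nlinarith [mul_le_mul_of_nonneg_right hε1 hδpos.le]
    have hd' : ∑ x, |P x - Q x| ≤ s := by
      refine le_trans (le_of_eq ?_) hc
      exact Finset.sum_congr rfl fun x _ => abs_sub_comm _ _
    have h1 := mc_le_aux hK1 hK2 P Q hP0 hP1 (hQ0 ω) (hQ1 ω) γ hγ0
      hmargP1 hmargP2 hmargQ1 hmargQ2 s hs0.le hsγ hc
    have h2 := mc_le_aux hK1 hK2 Q P (hQ0 ω) (hQ1 ω) hP0 hP1 γ hγ0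
      hmargQ1 hmargQ2 hmargP1 hmargP2 s hs0.le hsγ hd'
    have heq : 10 * (s / γ) = ε := by
      rw [hsdef, hγdef]
      field_simp
      ring
    rw [heq] at h1 h2
    have : |mcPmf Q - mcPmf P| ≤ ε := abs_sub_le_iff.2 ⟨by linarith, by linarith⟩
    linarith [hω]
  -- step 2: inclusion into union of subset events
  set EA : Finset (Fin K1 × Fin K2) → Set Ω := fun A =>
    {ω | (m:ℝ) * s / 2 ≤ ∑ t : Fin m,
      ((if Y t ω ∈ A then (1:ℝ) else 0) - ∑ y ∈ A, P y)} with hEAdef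
  have hsub2 : {ω | s < ∑ x, |empPmf2 m Y ω x - P x|}
      ⊆ ⋃ A ∈ (Finset.univ : Finset (Finset (Fin K1 × Fin K2))), EA A := by
    intro ω hω
    simp only [Set.mem_setOf_eq] at hω
    set Q : Fin K1 × Fin K2 → ℝ := empPmf2 m Y ω with hQdef
    set A : Finset (Fin K1 × Fin K2) := Finset.univ.filter (fun x => P x < Q x) with hAdef
    refine Set.mem_iUnion₂.2 ⟨A, Finset.mem_univ _, ?_⟩
    rw [hEAdef]
    simp only [Set.mem_setOf_eq]
    -- sum over t of indicator = m * Q(A)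
    have hQA : ∑ t : Fin m, (if Y t ω ∈ A then (1:ℝ) else 0) = (m:ℝ) * ∑ x ∈ A, Q x := by
      calc ∑ t : Fin m, (if Y t ω ∈ A then (1:ℝ) else 0)
          = ∑ t : Fin m, ∑ x ∈ A, (if Y t ω = x then (1:ℝ) else 0) :=
            Finset.sum_congr rfl fun t _ =>
              (Finset.sum_ite_eq A (Y t ω) (fun _ => (1:ℝ))).symm
        _ = ∑ x ∈ A, ∑ t : Fin m, (if Y t ω = x then (1:ℝ) else 0) := Finset.sum_comm
        _ = ∑ x ∈ A, (m:ℝ) * Q x := by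
            refine Finset.sum_congr rfl fun x _ => ?_
            rw [hQdef]
            show (∑ t : Fin m, (if Y t ω = x then (1:ℝ) else 0))
              = (m:ℝ) * ((m : ℝ)⁻¹ * ∑ t, if Y t ω = x then (1:ℝ) else 0)
            rw [← mul_assoc, mul_inv_cancel₀ hm0, one_mul]
        _ = (m:ℝ) * ∑ x ∈ A, Q x := (Finset.mul_sum _ _ _).symm
    have hsumsub : ∑ t : Fin m, ((if Y t ω ∈ A then (1:ℝ) else 0) - ∑ y ∈ A, P y)
        = (m:ℝ) * (∑ x ∈ A, (Q x - P x)) := by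
      rw [Finset.sum_sub_distrib, hQA, Finset.sum_const, Finset.card_univ, Fintype.card_fin,
        nsmul_eq_mul, Finset.sum_sub_distrib, mul_sub]
    rw [hsumsub]
    -- the filtered sum is at least s/2
    have hzero : ∑ x : Fin K1 × Fin K2, (Q x - P x) = 0 := by
      rw [Finset.sum_sub_distrib, hQ1 ω, hP1, sub_self]
    have hsplit := Finset.sum_filter_add_sum_filter_not Finset.univ
      (fun x => P x < Q x) (fun x => Q x - P x)
    have habsD : ∑ x : Fin K1 × Fin K2, |Q x - P x|
        = (∑ x ∈ Finset.univ.filter (fun x => P x < Q x), (Q x - P x))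
          - ∑ x ∈ Finset.univ.filter (fun x => ¬ P x < Q x), (Q x - P x) := by
      rw [← Finset.sum_filter_add_sum_filter_not Finset.univ (fun x => P x < Q x)
        (fun x => |Q x - P x|)]
      have e1 : ∑ x ∈ Finset.univ.filter (fun x => P x < Q x), |Q x - P x|
          = ∑ x ∈ Finset.univ.filter (fun x => P x < Q x), (Q x - P x) := by
        refine Finset.sum_congr rfl fun x hx => ?_
        have := (Finset.mem_filter.1 hx).2
        exact abs_of_pos (by linarith)
      have e2 : ∑ x ∈ Finset.univ.filter (fun x => ¬ P x < Q x), |Q x - P x|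
          = -∑ x ∈ Finset.univ.filter (fun x => ¬ P x < Q x), (Q x - P x) := by
        rw [← Finset.sum_neg_distrib]
        refine Finset.sum_congr rfl fun x hx => ?_
        have := (Finset.mem_filter.1 hx).2
        push_neg at this
        rw [abs_of_nonpos (by linarith)]
      rw [e1, e2]
      ring
    have hAgood : s / 2 < ∑ x ∈ A, (Q x - P x) := by
      rw [hAdef]
      have h2 : ∑ x ∈ Finset.univ.filter (fun x => ¬ P x < Q x), (Q x - P x)
          = -∑ x ∈ Finset.univ.filter (fun x => P x < Q x), (Q x - P x) := by
        linarith [hsplit, hzero]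
      rw [h2] at habsD
      have : s < ∑ x : Fin K1 × Fin K2, |Q x - P x| := hω
      linarith [habsD, this]
    calc (m:ℝ) * s / 2 = (m:ℝ) * (s / 2) := by ring
      _ ≤ (m:ℝ) * ∑ x ∈ A, (Q x - P x) :=
          mul_le_mul_of_nonneg_left hAgood.le hmRpos.le
  -- step 3: union bound + Chernoff
  have hmono : μ {ω | ε < |mcPmf (empPmf2 m Y ω) - mcPmf P|}
      ≤ ∑ A : Finset (Fin K1 × Fin K2), μ (EA A) :=
    le_trans (measure_mono (hsub.trans hsub2)) (measure_biUnion_finset_le _ _)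
  have hsum_ne : (∑ A : Finset (Fin K1 × Fin K2), μ (EA A)) ≠ ⊤ :=
    (ENNReal.sum_lt_top.2 fun A _ => measure_lt_top μ _).ne
  have htoReal : (μ {ω | ε < |mcPmf (empPmf2 m Y ω) - mcPmf P|}).toReal
      ≤ ∑ A : Finset (Fin K1 × Fin K2), (μ (EA A)).toReal := by
    refine le_trans (ENNReal.toReal_mono hsum_ne hmono) ?_
    rw [ENNReal.toReal_sum fun A _ => (measure_lt_top μ _).ne]
  have hchern : ∀ A : Finset (Fin K1 × Fin K2),
      (μ (EA A)).toReal ≤ Real.exp (-((m:ℝ) * s ^ 2 / 32)) := by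
    intro A
    have hl1 : s / 8 ≤ 1 := by
      rw [hsdef]
      nlinarith [mul_le_mul_of_nonneg_right hε1 hδpos.le]
    have h := chernoff_A (μ := μ) Y hYmeas hiid P hP0 hP1 hlaw A (s / 8) ((m:ℝ) * s / 2)
      (by positivity) hl1
    refine le_trans h (le_of_eq ?_)
    congr 1
    ring
  calc (μ {ω | ε < |mcPmf (empPmf2 m Y ω) - mcPmf P|}).toReal
      ≤ ∑ A : Finset (Fin K1 × Fin K2), (μ (EA A)).toReal := htoReal
    _ ≤ ∑ A : Finset (Fin K1 × Fin K2), Real.exp (-((m:ℝ) * s ^ 2 / 32)) :=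
        Finset.sum_le_sum fun A _ => hchern A
    _ = (2:ℝ) ^ (K1 * K2) * Real.exp (-((m:ℝ) * s ^ 2 / 32)) := by
        rw [Finset.sum_const, Finset.card_univ, Fintype.card_finset, Fintype.card_prod,
          Fintype.card_fin, Fintype.card_fin, nsmul_eq_mul]
        push_cast
        ring
    _ ≤ η := by
        rw [hsdef]
        exact final_numeric Kb K1 K2 hK1 hK2 hK1le hK2le ε η δ' (m:ℝ)
          hε hε1 hη hη1 hδpos hδhalf hm
end

section
/- Let X₁,…,Xₙ be real-valued random variables on a probability space, let fᵢ : ℝ → ℝ be bijective Borel-measurable functions with Borel-measurable inverses, and set Yᵢ = fᵢ(Xᵢ). Then for every finite simple graph G=(V,E) on {1,…,n}, ρ_G(Y₁,…,Yₙ) = ρ_G(X₁,…,Xₙ); moreover, a tuple (φ₁,…,φₙ) is feasible (respectively, optimal) for the NMC optimization of (X₁,…,Xₙ) if and only if (φ₁∘f₁^{-1},…,φₙ∘fₙ^{-1}) is feasible (respectively, optimal) for the NMC optimization of (Y₁,…,Yₙ). In particular, if the identity functions φᵢ(x) = x solve the NMC optimization for X, then gᵢ = fᵢ^{-1} solve the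 NMC optimization for Y. -/
open MeasureTheory

/-- Feasibility for the NMC optimization of real-valued random variables `Z`:
each `φᵢ` is Borel measurable, with `E[φᵢ(Zᵢ)] = 0` and `E[φᵢ(Zᵢ)²] = 1`. -/
def nmcFeasible {Ω : Type*} [MeasurableSpace Ω] (μ : Measure Ω) {n : ℕ}
    (Z : Fin n → Ω → ℝ) (φ : Fin n → ℝ → ℝ) : Prop :=
  (∀ i, Measurable (φ i)) ∧
  (∀ i, (∫ ω, φ i (Z i ω) ∂μ) = 0) ∧
  (∀ i, (∫ ω, (φ i (Z i ω)) ^ 2 ∂μ) = 1)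

/-- The NMC objective `Σ_{(i,i')∈E} E[φᵢ(Zᵢ)·φ_{i'}(Z_{i'})]`. -/
noncomputable def nmcObjective {Ω : Type*} [MeasurableSpace Ω] (μ : Measure Ω) {n : ℕ}
    (E : Finset (Fin n × Fin n)) (Z : Fin n → Ω → ℝ) (φ : Fin n → ℝ → ℝ) : ℝ :=
  ∑ e ∈ E, ∫ ω, φ e.1 (Z e.1 ω) * φ e.2 (Z e.2 ω) ∂μ

/-- The network maximal correlation of real-valued random variables `Z` over edge set `E`. -/
noncomputable def nmcValue {Ω : Type*} [MeasurableSpace Ω] (μ : Measure Ω) {n : ℕ}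
    (E : Finset (Fin n × Fin n)) (Z : Fin n → Ω → ℝ) : ℝ :=
  sSup {r : ℝ | ∃ φ : Fin n → ℝ → ℝ, nmcFeasible μ Z φ ∧ r = nmcObjective μ E Z φ}

/-- NMC is invariant under bijective (bimeasurable) transformations
`Yᵢ = fᵢ(Xᵢ)`: the values agree, feasible/optimal tuples correspond via composition with
`fᵢ⁻¹`, and in particular if the identities solve the NMC optimization for `X`, then the
inverses `gᵢ = fᵢ⁻¹` solve it for `Y`. -/
theorem nmc_invariant_under_bijections
    {Ω : Type*} [MeasurableSpace Ω] (μ : Measure Ω) [IsProbabilityMeasure μ]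
    (n : ℕ) (X : Fin n → Ω → ℝ) (hX : ∀ i, Measurable (X i))
    (f : Fin n → ℝ → ℝ) (hfbij : ∀ i, Function.Bijective (f i))
    (hfmeas : ∀ i, Measurable (f i))
    (g : Fin n → ℝ → ℝ) (hgmeas : ∀ i, Measurable (g i))
    (hgf : ∀ i, Function.LeftInverse (g i) (f i))
    (hfg : ∀ i, Function.RightInverse (g i) (f i))
    (E : Finset (Fin n × Fin n)) (hE : ∀ e ∈ E, e.1 ≠ e.2) :
    (nmcValue μ E (fun i ω => f i (X i ω)) = nmcValue μ E X) ∧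
    (∀ φ : Fin n → ℝ → ℝ,
      nmcFeasible μ X φ ↔
        nmcFeasible μ (fun i ω => f i (X i ω)) (fun i x => φ i (g i x))) ∧
    (∀ φ : Fin n → ℝ → ℝ,
      (nmcFeasible μ X φ ∧ nmcObjective μ E X φ = nmcValue μ E X) ↔
        (nmcFeasible μ (fun i ω => f i (X i ω)) (fun i x => φ i (g i x)) ∧
          nmcObjective μ E (fun i ω => f i (X i ω)) (fun i x => φ i (g i x)) =
            nmcValue μ E (fun i ω => f i (X i ω)))) ∧
    ((nmcFeasible μ X (fun _ x => x) ∧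
        nmcObjective μ E X (fun _ x => x) = nmcValue μ E X) →
      (nmcFeasible μ (fun i ω => f i (X i ω)) g ∧
        nmcObjective μ E (fun i ω => f i (X i ω)) g =
          nmcValue μ E (fun i ω => f i (X i ω)))) := by
  
  set Y : Fin n → Ω → ℝ := fun i ω => f i (X i ω) with hY
  have hcomp : ∀ (φ : Fin n → ℝ → ℝ) i (ω : Ω),
      φ i (g i (Y i ω)) = φ i (X i ω) := by
    intro φ i ω
    simp only [hY, hgf i (X i ω)]
  have hfeas : ∀ φ : Fin n → ℝ → ℝ,
      nmcFeasible μ X φ ↔ nmcFeasible μ Y (fun i x => φ i (g i x)) := by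
    intro φ
    constructor
    · rintro ⟨hm, h0, h1⟩
      refine ⟨fun i => (hm i).comp (hgmeas i), fun i => ?_, fun i => ?_⟩
      · simpa only [hcomp φ i] using h0 i
      · simpa only [hcomp φ i] using h1 i
    · rintro ⟨hm, h0, h1⟩
      refine ⟨fun i => ?_, fun i => ?_, fun i => ?_⟩
      · have : φ i = (fun x => φ i (g i x)) ∘ f i := by
          funext x; simp [hgf i x]
        rw [this]; exact (hm i).comp (hfmeas i)
      · simpa only [hcomp φ i] using h0 i
      · simpa only [hcomp φ i] using h1 i
  have hobj : ∀ φ : Fin n → ℝ → ℝ,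
      nmcObjective μ E Y (fun i x => φ i (g i x)) = nmcObjective μ E X φ := by
    intro φ
    unfold nmcObjective
    refine Finset.sum_congr rfl fun e _ => ?_
    congr 1
    funext ω
    simp only [hcomp φ]
  have hset : {r : ℝ | ∃ φ : Fin n → ℝ → ℝ, nmcFeasible μ Y φ ∧ r = nmcObjective μ E Y φ}
      = {r : ℝ | ∃ φ : Fin n → ℝ → ℝ, nmcFeasible μ X φ ∧ r = nmcObjective μ E X φ} := by
    ext r
    constructor
    · rintro ⟨ψ, hψ, rfl⟩
      refine ⟨fun i x => ψ i (f i x), ?_, ?_⟩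
      · rw [hfeas]
        have : (fun i x => ψ i (f i (g i x))) = ψ := by
          funext i x; rw [hfg i x]
        rw [this]; exact hψ
      · rw [← hobj (fun i x => ψ i (f i x))]
        congr 1
        funext i x; rw [hfg i x]
    · rintro ⟨φ, hφ, rfl⟩
      exact ⟨fun i x => φ i (g i x), (hfeas φ).mp hφ, (hobj φ).symm⟩
  have hval : nmcValue μ E Y = nmcValue μ E X := by
    unfold nmcValue; rw [hset]
  refine ⟨hval, hfeas, fun φ => ?_, fun h => ?_⟩
  · rw [← hfeas φ, hobj φ, hval]
  · have := (hfeas (fun _ x => x)).mp h.1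
    refine ⟨this, ?_⟩
    rw [hobj (fun _ x => x), hval]
    exact h.2
end
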